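/- arXiv:1808.00413 — 4 statements merged into one kernel-verified Lean document; each statement's English description precedes it below -/
import Mathlib

section
/- Let p be a prime. For u ∈ ℤ, let 𝒳_u be the set of tuples (m₁,m₂,m₃,m₄) ∈ {1,…,p}⁴ such that p does not divide any of mₖ or mₖ+u for k=1,…,4, and such that m₁⁻¹ − m₂⁻¹ + m₃⁻¹ − m₄⁻¹ ≡ 0 (mod p) and (m₁+u)⁻¹ − (m₂+u)⁻¹ + (m₃+u)⁻¹ − (m₄+u)⁻¹ ≡ 0 (mod p). Then Σ_{u=1}^{p} #𝒳_u ≤ p(2p² + 4(p−1)²), and in particular Σ_{u≤p} #𝒳_u = O(p³). -/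
/-!
Reducing modulo `p` embeds `Xset p u` into the set of quadruples `x` over `𝔽_p` with all `xₖ` and
`xₖ + v` nonzero satisfying both alternating reciprocal relations, where `v = u mod p`.
Over any finite field of order `q`, the first relation determines `x₄` from `x₁, x₂, x₃`, so there
are at most `q³` such quadruples. When `v ≠ 0` one does better: if `x₁ = x₂` the relation forces
`x₃ = x₄`, giving at most `q²` quadruples; if `x₁ ≠ x₂`, clearing denominators in
`x₃⁻¹ - x₄⁻¹ = α` and `(x₃ + v)⁻¹ - (x₄ + v)⁻¹ = β` and eliminating `x₄` leaves a quadratic in `x₃`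
with constant term `β v² ≠ 0`, so each pair `(x₁, x₂)` extends in at most two ways. Hence `v ≠ 0`
contributes at most `3p²`, the single `u = p` at most `p³`, and
`(p - 1) · 3p² + p³ ≤ p (2p² + 4(p - 1)²)`.
-/

def Xset (p : ℕ) (u : ℤ) : Finset (ℕ × ℕ × ℕ × ℕ) :=
  ((Finset.Icc 1 p) ×ˢ (Finset.Icc 1 p) ×ˢ (Finset.Icc 1 p) ×ˢ (Finset.Icc 1 p)).filter
    (fun q =>
      ((q.1 : ZMod p) ≠ 0 ∧ (q.2.1 : ZMod p) ≠ 0 ∧ (q.2.2.1 : ZMod p) ≠ 0 ∧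
        (q.2.2.2 : ZMod p) ≠ 0) ∧
      (((q.1 : ℤ) + u : ℤ) : ZMod p) ≠ 0 ∧ (((q.2.1 : ℤ) + u : ℤ) : ZMod p) ≠ 0 ∧
      (((q.2.2.1 : ℤ) + u : ℤ) : ZMod p) ≠ 0 ∧ (((q.2.2.2 : ℤ) + u : ℤ) : ZMod p) ≠ 0 ∧
      (q.1 : ZMod p)⁻¹ - (q.2.1 : ZMod p)⁻¹ + (q.2.2.1 : ZMod p)⁻¹ - (q.2.2.2 : ZMod p)⁻¹ = 0 ∧
      (((q.1 : ℤ) + u : ℤ) : ZMod p)⁻¹ - (((q.2.1 : ℤ) + u : ℤ) : ZMod p)⁻¹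
        + (((q.2.2.1 : ℤ) + u : ℤ) : ZMod p)⁻¹ - (((q.2.2.2 : ℤ) + u : ℤ) : ZMod p)⁻¹ = 0)

open Finset

section
variable {F : Type*} [Field F]

lemma quadratic_of_inv_sub_eq {x y v α β : F} (hx : x ≠ 0) (hy : y ≠ 0) (hxv : x + v ≠ 0)
    (hyv : y + v ≠ 0) (hα : x⁻¹ - y⁻¹ = α) (hβ : (x + v)⁻¹ - (y + v)⁻¹ = β) :
    (β * (1 - v * α) - α) * x ^ 2 + β * v * (2 - v * α) * x + β * v ^ 2 = 0 := by
  have h₁ : y - x = α * x * y := by rw [← hα]; field_simp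
  have h₂ : y - x = β * (x + v) * (y + v) := by rw [← hβ]; field_simp; ring
  linear_combination (1 - β * (x + v)) * h₁ - (1 - α * x) * h₂

open Polynomial in
lemma card_filter_quadratic_eq_zero_le_two [DecidableEq F] (s : Finset F) {a b c : F}
    (hc : c ≠ 0) : #{x ∈ s | a * x ^ 2 + b * x + c = 0} ≤ 2 := by
  set P : F[X] := C a * X ^ 2 + C b * X + C c
  have hP : P ≠ 0 := fun h => hc (by simpa [P] using congrArg (eval 0) h)
  calc #{x ∈ s | a * x ^ 2 + b * x + c = 0} ≤ P.natDegree :=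
        card_le_degree_of_subset_roots fun x hx => by
          rw [mem_roots hP]; simpa [P] using (mem_filter.mp hx).2
    _ ≤ 2 := by simp only [P]; compute_degree

variable [Fintype F] [DecidableEq F]

def invQuadruples (v : F) : Finset (F × F × F × F) :=
  {x | (x.1 ≠ 0 ∧ x.2.1 ≠ 0 ∧ x.2.2.1 ≠ 0 ∧ x.2.2.2 ≠ 0) ∧
    x.1 + v ≠ 0 ∧ x.2.1 + v ≠ 0 ∧ x.2.2.1 + v ≠ 0 ∧ x.2.2.2 + v ≠ 0 ∧
    x.1⁻¹ - x.2.1⁻¹ + x.2.2.1⁻¹ - x.2.2.2⁻¹ = 0 ∧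
    (x.1 + v)⁻¹ - (x.2.1 + v)⁻¹ + (x.2.2.1 + v)⁻¹ - (x.2.2.2 + v)⁻¹ = 0}

lemma injOn_invQuadruples_fst_three (v : F) :
    Set.InjOn (fun x : F × F × F × F => (x.1, x.2.1, x.2.2.1)) (invQuadruples v) := by
  rintro ⟨a, b, c, d⟩ hx ⟨a', b', c', d'⟩ hx' h
  simp only [invQuadruples, coe_filter, mem_univ, true_and, Set.mem_ofPred_eq] at hx hx'
  simp only [Prod.mk.injEq] at h
  obtain ⟨rfl, rfl, rfl⟩ := h
  obtain ⟨-, -, -, -, -, h, -⟩ := hx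
  obtain ⟨-, -, -, -, -, h', -⟩ := hx'
  rw [inv_injective (by linear_combination h' - h : d⁻¹ = d'⁻¹)]

lemma card_invQuadruples_le (v : F) : #(invQuadruples v) ≤ Fintype.card F ^ 3 :=
  calc #(invQuadruples v) ≤ #(univ : Finset (F × F × F)) :=
        card_le_card_of_injOn _ (fun _ _ => mem_coe.mpr (mem_univ _))
          (injOn_invQuadruples_fst_three v)
    _ = Fintype.card F ^ 3 := by simp [Fintype.card_prod]; ring

lemma card_invQuadruples_filter_fst_eq_le (v : F) :
    #{x ∈ invQuadruples v | x.1 = x.2.1} ≤ Fintype.card F ^ 2 := by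
  calc #{x ∈ invQuadruples v | x.1 = x.2.1} ≤ #(univ : Finset (F × F)) := by
        refine card_le_card_of_injOn (fun x => (x.1, x.2.2.1))
          (fun _ _ => mem_coe.mpr (mem_univ _)) fun x hx y hy h => ?_
        simp only [coe_filter, Set.mem_ofPred_eq, Prod.mk.injEq] at hx hy h
        exact injOn_invQuadruples_fst_three v hx.1 hy.1 (by simp [← hx.2, ← hy.2, h.1, h.2])
    _ = Fintype.card F ^ 2 := by simp [Fintype.card_prod]; ring

lemma card_invQuadruples_fiber_le_two {v : F} (hv : v ≠ 0) {r : F × F} (hr : r.1 ≠ r.2) :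
    #{x ∈ invQuadruples v | (x.1, x.2.1) = r} ≤ 2 := by
  obtain ⟨r₁, r₂⟩ := r
  set α := r₂⁻¹ - r₁⁻¹
  set β := (r₂ + v)⁻¹ - (r₁ + v)⁻¹
  have hβ : β ≠ 0 := sub_ne_zero.mpr fun h => hr (add_right_cancel (inv_injective h)).symm
  calc #{x ∈ invQuadruples v | (x.1, x.2.1) = (r₁, r₂)}
      ≤ #{z ∈ (univ : Finset F) |
          (β * (1 - v * α) - α) * z ^ 2 + β * v * (2 - v * α) * z + β * v ^ 2 = 0} := by
        refine card_le_card_of_injOn (fun x => x.2.2.1) ?_ ?_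
        · rintro ⟨a, b, c, d⟩ hx
          simp only [invQuadruples, coe_filter, mem_filter, mem_univ, true_and,
            Set.mem_ofPred_eq, Prod.mk.injEq] at hx ⊢
          obtain ⟨⟨⟨-, -, hc, hd⟩, -, -, hcv, hdv, h, h'⟩, rfl, rfl⟩ := hx
          exact quadratic_of_inv_sub_eq hc hd hcv hdv (by linear_combination h)
            (by linear_combination h')
        · intro x hx y hy h
          simp only [coe_filter, Set.mem_ofPred_eq, Prod.mk.injEq] at hx hy
          exact injOn_invQuadruples_fst_three v hx.1 hy.1 (by simp_all)
    _ ≤ 2 := card_filter_quadratic_eq_zero_le_two _ (mul_ne_zero hβ (pow_ne_zero 2 hv))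

lemma card_invQuadruples_le_of_ne_zero {v : F} (hv : v ≠ 0) :
    #(invQuadruples v) ≤ 3 * Fintype.card F ^ 2 := by
  have hoff : #{x ∈ invQuadruples v | x.1 ≠ x.2.1} ≤ 2 * Fintype.card F ^ 2 :=
    calc #{x ∈ invQuadruples v | x.1 ≠ x.2.1} ≤ 2 * #{r : F × F | r.1 ≠ r.2} :=
          card_le_mul_card_image_of_maps_to (f := fun x => (x.1, x.2.1))
            (fun x hx => by simp_all) 2 fun r hr =>
              (card_le_card (filter_subset_filter _ (filter_subset _ _))).trans
                (card_invQuadruples_fiber_le_two hv (by simpa using hr))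
      _ ≤ 2 * Fintype.card F ^ 2 := by
        grw [card_filter_le]; simp [Fintype.card_prod, sq]
  rw [← card_filter_add_card_filter_not (fun x : F × F × F × F => x.1 = x.2.1)]
  linarith [card_invQuadruples_filter_fst_eq_le v]
end

lemma natCast_injOn_Icc_of_ne_zero (p : ℕ) :
    Set.InjOn (Nat.cast : ℕ → ZMod p) {m | m ∈ Icc 1 p ∧ (m : ZMod p) ≠ 0} := by
  have hlt {m : ℕ} (hm : m ∈ Icc 1 p ∧ (m : ZMod p) ≠ 0) : m < p :=
    (mem_Icc.mp hm.1).2.lt_of_ne (by rintro rfl; exact hm.2 (ZMod.natCast_self _))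
  intro m hm n hn h
  rw [← ZMod.val_cast_of_lt (hlt hm), h, ZMod.val_cast_of_lt (hlt hn)]

lemma card_Xset_le_card_invQuadruples (p : ℕ) [Fact p.Prime] (u : ℤ) :
    #(Xset p u) ≤ #(invQuadruples (u : ZMod p)) := by
  refine card_le_card_of_injOn (fun q => ((q.1 : ZMod p), (q.2.1 : ZMod p), (q.2.2.1 : ZMod p),
    (q.2.2.2 : ZMod p))) ?_ ?_
  · rintro ⟨a, b, c, d⟩ hq
    simp only [Xset, coe_filter, mem_product, Set.mem_ofPred_eq] at hq
    simp only [invQuadruples, coe_filter, mem_univ, true_and, Set.mem_ofPred_eq]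
    push_cast at hq
    exact hq.2
  · rintro ⟨a, b, c, d⟩ hq ⟨a', b', c', d'⟩ hq' h
    simp only [Xset, coe_filter, mem_product, Set.mem_ofPred_eq] at hq hq'
    obtain ⟨⟨ha, hb, hc, hd⟩, ⟨ha₀, hb₀, hc₀, hd₀⟩, -⟩ := hq
    obtain ⟨⟨ha', hb', hc', hd'⟩, ⟨ha₀', hb₀', hc₀', hd₀'⟩, -⟩ := hq'
    simp only [Prod.mk.injEq] at h ⊢
    have inj := natCast_injOn_Icc_of_ne_zero p
    exact ⟨inj ⟨ha, ha₀⟩ ⟨ha', ha₀'⟩ h.1, inj ⟨hb, hb₀⟩ ⟨hb', hb₀'⟩ h.2.1,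
      inj ⟨hc, hc₀⟩ ⟨hc', hc₀'⟩ h.2.2.1, inj ⟨hd, hd₀⟩ ⟨hd', hd₀'⟩ h.2.2.2⟩

theorem diophantine_count (p : ℕ) (hp : p.Prime) :
    ∑ u ∈ Finset.Icc (1 : ℕ) p, (Xset p (u : ℤ)).card ≤ p * (2 * p ^ 2 + 4 * (p - 1) ^ 2) := by
  have := Fact.mk hp
  obtain ⟨n, rfl⟩ := Nat.exists_eq_add_one_of_ne_zero hp.ne_zero
  have hlt {u : ℕ} (hu : u ∈ Icc 1 n) : #(Xset (n + 1) u) ≤ 3 * (n + 1) ^ 2 := by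
    grw [card_Xset_le_card_invQuadruples, card_invQuadruples_le_of_ne_zero, ZMod.card]
    rw [Int.cast_natCast, Ne, ZMod.natCast_eq_zero_iff]
    exact Nat.not_dvd_of_pos_of_lt (mem_Icc.mp hu).1 (Nat.lt_succ_of_le (mem_Icc.mp hu).2)
  have hlast : #(Xset (n + 1) (n + 1 : ℕ)) ≤ (n + 1) ^ 3 := by
    grw [card_Xset_le_card_invQuadruples, card_invQuadruples_le, ZMod.card]
  rw [sum_Icc_succ_top (by omega)]
  grw [sum_le_sum fun u hu => hlt hu, hlast]
  simp only [sum_const, Nat.card_Icc, smul_eq_mul, Nat.add_sub_cancel]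
  nlinarith [sq_nonneg n]
end

section
/- Let p be a prime and x,y,w integers with p ∤ y. Define S(x,y,w;p) = Σ_{1≤m<p, p∤(m+w)} e_p(x·m⁻¹ + y·(m+w)⁻¹). Then for any finite set 𝒲 of integers that are pairwise incongruent modulo p, Σ_{w∈𝒲} |S(x,y,w;p)|⁴ = O(p⁴), with an absolute implied constant. -/
/-!
For `w ≢ 0` the substitution `m = w t` turns `S(x, y, w; p)` into `T(w⁻¹)`, where
`T(a) = ∑_{t ≢ 0, -1} e_p(a f(t))` and `f(t) = x/t + y/(t + 1)` does not depend on `w`. As the `w`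
are pairwise incongruent, so are the frequencies `w⁻¹`; hence the sum is at most `p⁴` (the term
with `w ≡ 0`, bounded trivially) plus the complete fourth moment `∑_a |T(a)|⁴`. By orthogonality
of characters the latter is `p` times the number of solutions of `f(t₁) + f(t₂) = f(t₃) + f(t₄)`,
and there are at most `2p³` of them: for `y ≢ 0`, `f(t) = c` is a nonzero polynomial equation
of degree at most two.
-/

open Finset

noncomputable def ep (p : ℕ) (t : ZMod p) : ℂ :=
  Complex.exp (2 * Real.pi * Complex.I * (t.val : ℂ) / p)

noncomputable def S (p : ℕ) (x y w : ℤ) : ℂ :=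
  ∑ m ∈ (Finset.Ico 1 p).filter (fun m : ℕ => ¬ ((p : ℤ) ∣ ((m : ℤ) + w))),
    ep p ((x : ZMod p) * (m : ZMod p)⁻¹ + (y : ZMod p) * (((m : ℤ) + w : ℤ) : ZMod p)⁻¹)

namespace AddChar

variable {R ι : Type*} [CommRing R]

lemma sq_sum_apply_mul {M : Type*} [CommSemiring M] (ψ : AddChar R M) (s : Finset ι)
    (f : ι → R) (a : R) :
    (∑ i ∈ s, ψ (a * f i)) ^ 2 = ∑ q ∈ s ×ˢ s, ψ (a * (f q.1 + f q.2)) := by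
  simp only [sq, sum_mul_sum, sum_product, mul_add, map_add_eq_mul]

variable [Fintype R] [DecidableEq R] {ψ : AddChar R ℂ}

lemma sum_norm_sum_apply_mul_sq (hψ : ψ.IsPrimitive) (s : Finset ι) (f : ι → R) :
    ∑ a, ‖∑ i ∈ s, ψ (a * f i)‖ ^ 2 = Fintype.card R * #{q ∈ s ×ˢ s | f q.1 = f q.2} := by
  apply Complex.ofReal_injective
  push_cast
  calc ∑ a, ((‖∑ i ∈ s, ψ (a * f i)‖ : ℂ)) ^ 2
      = ∑ a, ∑ i ∈ s, ∑ j ∈ s, ψ (a * (f i - f j)) := by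
        simp only [← Complex.mul_conj', map_sum, sum_mul_sum, ← map_neg_eq_conj,
          ← map_add_eq_mul, ← mul_neg, ← mul_add, sub_eq_add_neg]
    _ = ∑ i ∈ s, ∑ j ∈ s, ∑ a, ψ (a * (f i - f j)) := by
        rw [sum_comm]; exact sum_congr rfl fun _ _ => sum_comm
    _ = Fintype.card R * #{q ∈ s ×ˢ s | f q.1 = f q.2} := by
        rw [card_filter, sum_product]
        push_cast
        simp only [sum_mulShift _ hψ, sub_eq_zero, mul_sum, mul_ite, mul_one, mul_zero,
          Nat.cast_ite, Nat.cast_zero]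

lemma sum_norm_sum_apply_mul_pow_four (hψ : ψ.IsPrimitive) (s : Finset ι) (f : ι → R) :
    ∑ a, ‖∑ i ∈ s, ψ (a * f i)‖ ^ 4 =
      Fintype.card R * #{Q ∈ (s ×ˢ s) ×ˢ (s ×ˢ s) | f Q.1.1 + f Q.1.2 = f Q.2.1 + f Q.2.2} := by
  have h (a : R) : ‖∑ i ∈ s, ψ (a * f i)‖ ^ 4 = ‖∑ q ∈ s ×ˢ s, ψ (a * (f q.1 + f q.2))‖ ^ 2 := by
    rw [← sq_sum_apply_mul, norm_pow, ← pow_mul]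
  simp_rw [h]
  exact sum_norm_sum_apply_mul_sq hψ (s ×ˢ s) fun q => f q.1 + f q.2

end AddChar

lemma card_filter_add_eq_add_le {ι G : Type*} [AddCommGroup G] [DecidableEq G] (s : Finset ι)
    (f : ι → G) {k : ℕ} (hk : ∀ c, #{i ∈ s | f i = c} ≤ k) :
    #{Q ∈ (s ×ˢ s) ×ˢ (s ×ˢ s) | f Q.1.1 + f Q.1.2 = f Q.2.1 + f Q.2.2} ≤ k * #s ^ 3 := by
  calc #{Q ∈ (s ×ˢ s) ×ˢ (s ×ˢ s) | f Q.1.1 + f Q.1.2 = f Q.2.1 + f Q.2.2}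
      = ∑ q ∈ s ×ˢ s, ∑ i ∈ s, #{j ∈ s | f j = f q.1 + f q.2 - f i} := by
        simp only [card_filter, sum_product, eq_sub_iff_add_eq', eq_comm]
    _ ≤ ∑ q ∈ s ×ˢ s, ∑ i ∈ s, k := by gcongr; exact hk _
    _ = k * #s ^ 3 := by simp [card_product]; ring

variable {K : Type*} [Field K] [Fintype K] [DecidableEq K]

lemma card_filter_mul_inv_add_mul_inv_add_one_eq_le_two {x y : K} (hy : y ≠ 0) (c : K) :
    #{t | (t ≠ 0 ∧ t + 1 ≠ 0) ∧ x * t⁻¹ + y * (t + 1)⁻¹ = c} ≤ 2 := by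
  open Polynomial in
  set q : K[X] := C c * X ^ 2 + C (c - x - y) * X + C (-x)
  have hq : q ≠ 0 := by
    have : q.eval (-1) = y := by simp [q]; ring
    rintro h
    exact hy (by simpa [h] using this.symm)
  calc #{t | (t ≠ 0 ∧ t + 1 ≠ 0) ∧ x * t⁻¹ + y * (t + 1)⁻¹ = c}
      ≤ #q.roots.toFinset := by
        refine card_le_card fun t ht => ?_
        simp only [mem_filter, mem_univ, true_and] at ht
        obtain ⟨⟨ht0, ht1⟩, htc⟩ := ht
        rw [Multiset.mem_toFinset, mem_roots hq]
        field_simp at htc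
        simp only [IsRoot, q, eval_add, eval_mul, eval_C, eval_pow, eval_X]
        linear_combination -htc
    _ ≤ q.natDegree := (Multiset.toFinset_card_le _).trans (card_roots' q)
    _ ≤ 2 := natDegree_quadratic_le

noncomputable def twoPoleSum (ψ : AddChar K ℂ) (x y w : K) : ℂ :=
  ∑ m with m ≠ 0 ∧ m + w ≠ 0, ψ (x * m⁻¹ + y * (m + w)⁻¹)

lemma twoPoleSum_eq_of_ne_zero (ψ : AddChar K ℂ) (x y : K) {w : K} (hw : w ≠ 0) :
    twoPoleSum ψ x y w = ∑ t with t ≠ 0 ∧ t + 1 ≠ 0, ψ (w⁻¹ * (x * t⁻¹ + y * (t + 1)⁻¹)) := by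
  refine sum_nbij' (· / w) (· * w) ?_ ?_ ?_ ?_ ?_ <;>
    simp only [mem_filter, mem_univ, true_and]
  · rintro m ⟨hm, hmw⟩
    exact ⟨div_ne_zero hm hw, by rwa [div_add_one hw, div_ne_zero_iff, and_iff_left hw]⟩
  · rintro t ⟨ht, ht1⟩
    exact ⟨mul_ne_zero ht hw, by rw [← add_one_mul]; exact mul_ne_zero ht1 hw⟩
  · exact fun m _ => div_mul_cancel₀ m hw
  · exact fun t _ => mul_div_cancel_right₀ t hw
  · rintro m ⟨hm, hmw⟩
    congr 1
    field_simp

lemma norm_twoPoleSum_le (ψ : AddChar K ℂ) (x y w : K) :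
    ‖twoPoleSum ψ x y w‖ ≤ Fintype.card K :=
  (norm_sum_le _ _).trans <| by
    simpa [AddChar.norm_apply] using card_le_univ _

lemma sum_norm_twoPoleSum_pow_four_le {ψ : AddChar K ℂ} (hψ : ψ.IsPrimitive) (x : K) {y : K}
    (hy : y ≠ 0) : ∑ w, ‖twoPoleSum ψ x y w‖ ^ 4 ≤ 3 * (Fintype.card K : ℝ) ^ 4 := by
  set D : Finset K := {t | t ≠ 0 ∧ t + 1 ≠ 0}
  set f : K → K := fun t => x * t⁻¹ + y * (t + 1)⁻¹
  set q := Fintype.card K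
  have hmoment : ∑ a, ‖∑ t ∈ D, ψ (a * f t)‖ ^ 4 ≤ 2 * (q : ℝ) ^ 4 := by
    have hcount := card_filter_add_eq_add_le D f fun c => by
      rw [filter_filter]; exact card_filter_mul_inv_add_mul_inv_add_one_eq_le_two hy c
    have hD : #D ≤ q := card_le_univ D
    rw [AddChar.sum_norm_sum_apply_mul_pow_four hψ]
    calc (q : ℝ) * #{Q ∈ (D ×ˢ D) ×ˢ (D ×ˢ D) | f Q.1.1 + f Q.1.2 = f Q.2.1 + f Q.2.2}
        ≤ q * (2 * q ^ 3) := by gcongr; exact_mod_cast hcount.trans (by gcongr)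
      _ = 2 * q ^ 4 := by ring
  calc ∑ w, ‖twoPoleSum ψ x y w‖ ^ 4
      = ‖twoPoleSum ψ x y 0‖ ^ 4 + ∑ w ∈ univ.erase 0, ‖∑ t ∈ D, ψ (w⁻¹ * f t)‖ ^ 4 := by
        rw [← add_sum_erase _ _ (mem_univ 0)]
        congr 1
        refine sum_congr rfl fun w hw => ?_
        rw [twoPoleSum_eq_of_ne_zero _ _ _ (ne_of_mem_erase hw)]
    _ ≤ q ^ 4 + ∑ w, ‖∑ t ∈ D, ψ (w⁻¹ * f t)‖ ^ 4 := by
        gcongr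
        · exact norm_twoPoleSum_le ψ x y 0
        · exact erase_subset _ _
    _ = q ^ 4 + ∑ a, ‖∑ t ∈ D, ψ (a * f t)‖ ^ 4 := by
        congr 1
        exact Fintype.sum_bijective _ inv_involutive.bijective _ _ fun _ => rfl
    _ ≤ 3 * q ^ 4 := by linarith

lemma ep_eq_stdAddChar (p : ℕ) [NeZero p] (t : ZMod p) : ep p t = ZMod.stdAddChar t := by
  rw [ZMod.stdAddChar_apply, ZMod.toCircle_apply, ep]

lemma S_eq_twoPoleSum (p : ℕ) [Fact p.Prime] (x y w : ℤ) :
    S p x y w = twoPoleSum ZMod.stdAddChar (x : ZMod p) y w := by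
  have hdvd (m : ℕ) : (p : ℤ) ∣ m + w ↔ (m : ZMod p) + w = 0 := by
    rw [← ZMod.intCast_zmod_eq_zero_iff_dvd]; push_cast; rfl
  have hzero {m : ℕ} (hm : m < p) : (m : ZMod p) = 0 ↔ m = 0 := by
    rw [ZMod.natCast_eq_zero_iff]
    exact ⟨fun h => Nat.eq_zero_of_dvd_of_lt h hm, fun h => h ▸ dvd_zero p⟩
  refine sum_nbij' Nat.cast ZMod.val ?_ ?_ ?_ ?_ ?_ <;>
    simp only [mem_filter, mem_univ, true_and, mem_Ico, hdvd]
  · rintro m ⟨⟨hm1, hmp⟩, hmw⟩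
    exact ⟨by rw [Ne, hzero hmp]; omega, hmw⟩
  · rintro a ⟨ha, haw⟩
    refine ⟨⟨Nat.pos_of_ne_zero ((ZMod.val_ne_zero a).2 ha), ZMod.val_lt a⟩, ?_⟩
    rwa [ZMod.natCast_zmod_val]
  · exact fun m hm => ZMod.val_natCast_of_lt hm.1.2
  · exact fun a _ => ZMod.natCast_zmod_val a
  · intro m _
    rw [ep_eq_stdAddChar]
    push_cast
    rfl

theorem fourth_moment_bound :
    ∃ C : ℝ, 0 < C ∧ ∀ (p : ℕ), p.Prime → ∀ (x y : ℤ), ¬ ((p : ℤ) ∣ y) →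
      ∀ (𝒲 : Finset ℤ),
        (∀ w ∈ 𝒲, ∀ w' ∈ 𝒲, ((w : ZMod p) = (w' : ZMod p)) → w = w') →
        ∑ w ∈ 𝒲, (‖S p x y w‖) ^ 4 ≤ C * (p : ℝ) ^ 4 := by
  refine ⟨3, by norm_num, fun p hp x y hy 𝒲 h𝒲 => ?_⟩
  have : Fact p.Prime := ⟨hp⟩
  have hy' : (y : ZMod p) ≠ 0 := by rwa [Ne, ZMod.intCast_zmod_eq_zero_iff_dvd]
  calc ∑ w ∈ 𝒲, ‖S p x y w‖ ^ 4
      = ∑ a ∈ 𝒲.image (Int.cast : ℤ → ZMod p),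
          ‖twoPoleSum ZMod.stdAddChar (x : ZMod p) y a‖ ^ 4 := by
        rw [sum_image fun w hw w' hw' => h𝒲 w hw w' hw']
        simp only [S_eq_twoPoleSum]
    _ ≤ ∑ a, ‖twoPoleSum ZMod.stdAddChar (x : ZMod p) y a‖ ^ 4 :=
        sum_le_sum_of_subset_of_nonneg (subset_univ _) fun _ _ _ => by positivity
    _ ≤ 3 * (p : ℝ) ^ 4 := by
        simpa only [ZMod.card] using
          sum_norm_twoPoleSum_pow_four_le (ZMod.isPrimitive_stdAddChar p) _ hy'
end

section
/- Let α > 1 be real and N ≤ p where p is a prime. Then for any reals β, γ and any residue s modulo p, the number of n ∈ {1,…,N} with ⌊nα + β − γ⌋ ≡ s (mod p) is less than 1 + α. -/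
/-!
The map `f n = ⌊n α + β - γ⌋` is strictly increasing because `α > 1`, so the `n` counted have
distinct `f`-values, all in one residue class mod `p`; `k` such values are spread over at least
`(k - 1) p`. On the other hand `f N - f 1 < (N - 1) α + 1 ≤ (p - 1) α + 1 < p α`, hence `k - 1 < α`.
-/

open Finset

namespace Int

theorem card_sub_one_mul_le_of_modEq {T : Finset ℤ} {p lo hi r : ℤ} (hp : 0 < p)
    (hlohi : lo ≤ hi) (hT : ∀ x ∈ T, x ∈ Icc lo hi) (hmod : ∀ x ∈ T, x ≡ r [ZMOD p]) :
    ((#T : ℤ) - 1) * p ≤ hi - lo := by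
  have hmaps : ∀ x ∈ T, (x - lo) / p ∈ Icc 0 ((hi - lo) / p) := by
    intro x hx
    obtain ⟨hlo, hhi⟩ := mem_Icc.1 (hT x hx)
    exact mem_Icc.2 ⟨Int.ediv_nonneg (by omega) hp.le,
      Int.ediv_le_ediv hp (by omega)⟩
  have hinj : Set.InjOn (fun x => (x - lo) / p) T := by
    intro x hx y hy hxy
    have hrem : (x - lo) % p = (y - lo) % p :=
      Int.ModEq.sub_right lo ((hmod x hx).trans (hmod y hy).symm)
    have hx' := Int.mul_ediv_add_emod (x - lo) p
    have hy' := Int.mul_ediv_add_emod (y - lo) p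
    simp only at hxy
    rw [hxy, hrem] at hx'
    linarith
  have hcard : #T ≤ ((hi - lo) / p + 1).toNat := by
    simpa [Int.card_Icc] using card_le_card_of_injOn _ hmaps hinj
  have hq : 0 ≤ (hi - lo) / p := Int.ediv_nonneg (by omega) hp.le
  calc ((#T : ℤ) - 1) * p ≤ (hi - lo) / p * p := by
        gcongr
        omega
    _ ≤ hi - lo := Int.ediv_mul_le _ hp.ne'

theorem floor_sub_floor_lt_sub_add_one (x y : ℝ) : ((⌊x⌋ - ⌊y⌋ : ℤ) : ℝ) < x - y + 1 := by
  push_cast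
  linarith [Int.floor_le x, Int.lt_floor_add_one y]

end Int

theorem strictMono_floor_mul_add {α : ℝ} (hα : 1 ≤ α) (c : ℝ) :
    StrictMono (fun n : ℕ => ⌊(n : ℝ) * α + c⌋) := by
  refine strictMono_nat_of_lt_succ fun n => ?_
  rw [← Int.add_one_le_iff, ← Int.floor_add_one]
  exact Int.floor_le_floor (by push_cast; linarith)

theorem residue_class_count_general (p : ℕ) (α β γ : ℝ) (hα : 1 < α)
    (N : ℕ) (hN : N ≤ p) (s : ℤ) :
    (((Finset.Icc 1 N).filter
        (fun n : ℕ => ((⌊(n : ℝ) * α + β - γ⌋ : ℤ) : ZMod p) = (s : ZMod p))).card : ℝ)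
      < 1 + α := by
  simp only [add_sub_assoc]
  set f : ℕ → ℤ := fun n => ⌊(n : ℝ) * α + (β - γ)⌋
  have hf : StrictMono f := strictMono_floor_mul_add hα.le (β - γ)
  set S := (Icc 1 N).filter (fun n : ℕ => ((f n : ℤ) : ZMod p) = (s : ZMod p))
  obtain rfl | hN1 := Nat.eq_zero_or_pos N
  · rw [show S = ∅ by simp [S], card_empty, Nat.cast_zero]
    linarith
  have hp : (0 : ℝ) < p := by exact_mod_cast hN1.trans_le hN
  have hspread : ((#S : ℤ) - 1) * p ≤ f N - f 1 := by
    rw [← card_image_of_injOn hf.injective.injOn]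
    refine Int.card_sub_one_mul_le_of_modEq (r := s) (by omega) (hf.monotone hN1) ?_ ?_
    all_goals simp only [S, mem_image, mem_filter, mem_Icc]
    · rintro _ ⟨n, ⟨⟨h1, hn⟩, -⟩, rfl⟩
      exact ⟨hf.monotone h1, hf.monotone hn⟩
    · rintro _ ⟨n, ⟨-, hn⟩, rfl⟩
      exact (ZMod.intCast_eq_intCast_iff _ _ _).1 hn
  have hfN : ((f N - f 1 : ℤ) : ℝ) < (N - 1) * α + 1 := by
    have := Int.floor_sub_floor_lt_sub_add_one ((N : ℝ) * α + (β - γ)) ((1 : ℕ) * α + (β - γ))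
    simp only [f]
    push_cast at this ⊢
    linarith
  have hNp : (N : ℝ) ≤ p := by exact_mod_cast hN
  have hlt : ((#S : ℝ) - 1) * p < α * p := by
    calc ((#S : ℝ) - 1) * p ≤ ((f N - f 1 : ℤ) : ℝ) := by exact_mod_cast hspread
      _ < (N - 1) * α + 1 := hfN
      _ ≤ α * p := by nlinarith
  linarith [lt_of_mul_lt_mul_right hlt hp.le]

theorem residue_class_count (p : ℕ) (hp : p.Prime) (α β γ : ℝ) (hα : 1 < α)
    (N : ℕ) (hN : N ≤ p) (s : ℤ) :
    (((Finset.Icc 1 N).filter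
        (fun n : ℕ => ((⌊(n : ℝ) * α + β - γ⌋ : ℤ) : ZMod p) = (s : ZMod p))).card : ℝ)
      < 1 + α :=
  residue_class_count_general p α β γ hα N hN s
end

section
/- For any real α, any real β, and any positive integer N, the discrepancy satisfies D_{α,β}(N) ≤ 8·D_{α,0}(N). -/
attribute [local instance] Classical.propDecidable

noncomputable def D (α β : ℝ) (N : ℕ) : ℝ :=
  sSup {d : ℝ | ∃ x y : ℝ, 0 ≤ x ∧ x < y ∧ y < 1 ∧
    d = |(((Finset.Icc 1 N).filter
            (fun n : ℕ => Int.fract ((n : ℝ) * α + β) ∈ Set.Ico x y)).card : ℝ) / N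
          - (y - x)|}

/-!
Write `b = {β}`, so that `{nα + β} = {{nα} + b}`. For `t ∈ [0, 1)` the condition
`{t + b} ∈ [x, y)` means `t ∈ [x - b, y - b) ∪ [x - b + 1, y - b + 1)`; intersected with `[0, 1)`
these are two disjoint intervals of total length `y - x`. Hence the local discrepancy of the
shifted sequence on `[x, y)` is the sum of two local discrepancies of `({nα})` on subintervals of
`[0, 1]`. An interval `[a, 1)` is not directly covered by the supremum defining `D`, but its local
discrepancy is minus that of `[0, a)`. This gives `D_{α,β}(N) ≤ 2 D_{α,0}(N)`.
-/

open Finset Int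

section

variable (s : ℕ → ℝ) (N : ℕ)

noncomputable def localDiscrepancy (a b : ℝ) : ℝ :=
  (((Icc 1 N).filter (fun n : ℕ => s n ∈ Set.Ico a b)).card : ℝ) / N - (b - a)

noncomputable def discrepancy : ℝ :=
  sSup {d : ℝ | ∃ x y : ℝ, 0 ≤ x ∧ x < y ∧ y < 1 ∧ d = |localDiscrepancy s N x y|}

variable {s N}

theorem localDiscrepancy_eq_add_of_mem_iff {s' : ℕ → ℝ} {x y a b c d : ℝ} (hbc : b ≤ c)
    (hmem : ∀ n, s' n ∈ Set.Ico x y ↔ s n ∈ Set.Ico a b ∨ s n ∈ Set.Ico c d)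
    (hlen : y - x = (b - a) + (d - c)) :
    localDiscrepancy s' N x y = localDiscrepancy s N a b + localDiscrepancy s N c d := by
  have hcard : ((Icc 1 N).filter (fun n => s' n ∈ Set.Ico x y)).card
      = ((Icc 1 N).filter (fun n => s n ∈ Set.Ico a b)).card
        + ((Icc 1 N).filter (fun n => s n ∈ Set.Ico c d)).card := by
    rw [← card_union_of_disjoint
      (disjoint_filter.2 fun n _ h₁ h₂ => (h₁.2.trans_le hbc).not_ge h₂.1), ← filter_or]
    exact congrArg card <| filter_congr fun n _ => hmem n
  simp only [localDiscrepancy, hcard, hlen]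
  push_cast
  ring

theorem localDiscrepancy_self (a : ℝ) : localDiscrepancy s N a a = 0 := by
  simp [localDiscrepancy]

theorem localDiscrepancy_add {a b c : ℝ} (hab : a ≤ b) (hbc : b ≤ c) :
    localDiscrepancy s N a b + localDiscrepancy s N b c = localDiscrepancy s N a c :=
  (localDiscrepancy_eq_add_of_mem_iff le_rfl
    (fun n => by rw [← Set.mem_union, Set.Ico_union_Ico_eq_Ico hab hbc]) (by ring)).symm

theorem localDiscrepancy_zero_one (hs : ∀ n, s n ∈ Set.Ico 0 1) (hN : N ≠ 0) :
    localDiscrepancy s N 0 1 = 0 := by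
  rw [localDiscrepancy, filter_true_of_mem fun n _ => hs n]
  simp [hN]

variable (s N) in
theorem discrepancy_nonneg : 0 ≤ discrepancy s N :=
  Real.sSup_nonneg fun _ ⟨_, _, _, _, _, hd⟩ => hd ▸ abs_nonneg _

theorem abs_localDiscrepancy_le_discrepancy {x y : ℝ} (hx : 0 ≤ x) (hxy : x < y) (hy : y < 1) :
    |localDiscrepancy s N x y| ≤ discrepancy s N := by
  refine le_csSup ⟨1, ?_⟩ ⟨x, y, hx, hxy, hy, rfl⟩
  rintro _ ⟨x, y, hx, hxy, hy, rfl⟩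
  have hcard : (((Icc 1 N).filter (fun n => s n ∈ Set.Ico x y)).card : ℝ) ≤ N := by
    exact_mod_cast (card_filter_le _ _).trans (by simp)
  exact abs_sub_le_of_nonneg_of_le (by positivity) (div_le_one_of_le₀ hcard N.cast_nonneg)
    (by linarith) (by linarith)

theorem abs_localDiscrepancy_le_discrepancy_of_le_one (hs : ∀ n, s n ∈ Set.Ico 0 1)
    (hN : N ≠ 0) {a b : ℝ} (ha : 0 ≤ a) (hab : a ≤ b) (hb : b ≤ 1) :
    |localDiscrepancy s N a b| ≤ discrepancy s N := by
  rcases hab.eq_or_lt with rfl | hab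
  · simpa [localDiscrepancy_self] using discrepancy_nonneg s N
  rcases hb.lt_or_eq with hb | rfl
  · exact abs_localDiscrepancy_le_discrepancy ha hab hb
  have hcompl : localDiscrepancy s N a 1 = -localDiscrepancy s N 0 a := by
    linarith [localDiscrepancy_add (s := s) (N := N) ha hab.le, localDiscrepancy_zero_one hs hN]
  rw [hcompl, abs_neg]
  rcases ha.eq_or_lt with rfl | ha
  · simpa [localDiscrepancy_self] using discrepancy_nonneg s N
  · exact abs_localDiscrepancy_le_discrepancy le_rfl ha hab

theorem fract_add_mem_Ico_iff {t b x y : ℝ} (ht : t ∈ Set.Ico 0 1) (hb : b ∈ Set.Ico 0 1)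
    (hx : 0 ≤ x) (hy : y ≤ 1) :
    fract (t + b) ∈ Set.Ico x y ↔
      t ∈ Set.Ico (max (x - b) 0) (max (y - b) 0) ∨
        t ∈ Set.Ico (min (x - b + 1) 1) (min (y - b + 1) 1) := by
  obtain ⟨ht₀, ht₁⟩ := ht
  obtain ⟨hb₀, hb₁⟩ := hb
  rcases lt_or_ge (t + b) 1 with hlt | hge
  · rw [fract_eq_self.2 ⟨by linarith, hlt⟩]
    simp only [Set.mem_Ico]
    grind
  · rw [← fract_sub_one, fract_eq_self.2 ⟨by linarith, by linarith⟩]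
    simp only [Set.mem_Ico]
    grind

theorem fract_fract_add (a b : ℝ) : fract (fract a + b) = fract (a + b) :=
  fract_eq_fract.2 ⟨-⌊a⌋, by rw [fract]; push_cast; ring⟩

theorem discrepancy_fract_add_le (hs : ∀ n, s n ∈ Set.Ico 0 1) (hN : N ≠ 0) (β : ℝ) :
    discrepancy (fun n => fract (s n + β)) N ≤ 2 * discrepancy s N := by
  set b := fract β
  have hb : b ∈ Set.Ico 0 1 := ⟨fract_nonneg β, fract_lt_one β⟩
  refine Real.sSup_le ?_ (by linarith [discrepancy_nonneg s N])
  rintro _ ⟨x, y, hx, hxy, hy, rfl⟩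
  have hsplit : localDiscrepancy (fun n => fract (s n + β)) N x y
      = localDiscrepancy s N (max (x - b) 0) (max (y - b) 0)
        + localDiscrepancy s N (min (x - b + 1) 1) (min (y - b + 1) 1) := by
    refine localDiscrepancy_eq_add_of_mem_iff (by grind) (fun n => ?_) (by grind)
    have hfract : fract (s n + β) = fract (s n + b) := by
      rw [add_comm, ← fract_fract_add, add_comm]
    rw [hfract]
    exact fract_add_mem_Ico_iff (hs n) hb hx hy.le
  rw [hsplit, two_mul]
  refine (abs_add_le _ _).trans (add_le_add ?_ ?_) <;>
    exact abs_localDiscrepancy_le_discrepancy_of_le_one hs hN (by grind) (by grind) (by grind)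

end

theorem D_eq_discrepancy (α β : ℝ) (N : ℕ) :
    D α β N = discrepancy (fun n => fract ((n : ℝ) * α + β)) N :=
  rfl

theorem discrepancy_shift_bound (α β : ℝ) (N : ℕ) (hN : 0 < N) :
    D α β N ≤ 8 * D α 0 N := by
  have hshift : D α β N ≤ 2 * D α 0 N := by
    simpa only [D_eq_discrepancy, fract_fract_add, add_zero] using
      discrepancy_fract_add_le (fun n => ⟨fract_nonneg _, fract_lt_one _⟩) hN.ne' β
  have hnonneg : 0 ≤ D α 0 N := discrepancy_nonneg _ N
  linarith
end
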